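/- For each fixed x ∈ 𝕋^d and Λ ∈ ℝ^d, the cell problem admits at most one solution: if (w̃_1, m̃_1, H̃_1) and (w̃_2, m̃_2, H̃_2), with w̃_i ∈ C^{2,α}_#(𝒴^d)/ℝ, m̃_i ∈ C^{1,α}_#(𝒴^d) positive, H̃_i ∈ ℝ, both satisfy (1/2)|Λ+∇_y w̃|² + V(x,y) = ln m̃ + H̃ and −div_y(m̃(Λ+∇_y w̃)) = 0 in 𝒴^d with ∫_{𝒴^d} m̃ dy = 1, then w̃_1 = w̃_2 (in C^{2,α}_#(𝒴^d)/ℝ), m̃_1 = m̃_2, and H̃_1 = H̃_2. -/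

import Mathlib

open MeasureTheory Filter Topology Function

noncomputable section

/-- The unit cell `𝒴^d = [0,1)^d`. -/
def cube (d : ℕ) : Set (Fin d → ℝ) := Set.univ.pi fun _ => Set.Ico (0 : ℝ) 1

/-- `ℤ^d`-periodicity of a function on `ℝ^d`; functions on the torus `𝕋^d`
(and `𝒴^d`-periodic functions) are identified with such functions. -/
def ZPer {d : ℕ} (f : (Fin d → ℝ) → ℝ) : Prop :=
  ∀ (x : Fin d → ℝ) (k : Fin d → ℤ), f (fun i => x i + (k i : ℝ)) = f x

/-- The `i`-th partial derivative. -/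
def pder {d : ℕ} (i : Fin d) (f : (Fin d → ℝ) → ℝ) (x : Fin d → ℝ) : ℝ :=
  fderiv ℝ f x (Pi.single i 1)

/-- `V : 𝕋^d × ℝ^d → ℝ` smooth, `𝒴^d`-periodic in the second variable
(and periodic in the first, i.e. defined on the torus). -/
def SmoothV {d : ℕ} (V : (Fin d → ℝ) → (Fin d → ℝ) → ℝ) : Prop :=
  ContDiff ℝ (⊤ : ℕ∞) (uncurry V) ∧ (∀ y, ZPer fun x => V x y) ∧ (∀ x, ZPer (V x))

/-- `sup_{(x,y) ∈ 𝕋^d × 𝒴^d} V (x,y)` (by periodicity, the sup over all of `ℝ^d × ℝ^d`). -/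
def supV {d : ℕ} (V : (Fin d → ℝ) → (Fin d → ℝ) → ℝ) : ℝ :=
  ⨆ q : (Fin d → ℝ) × (Fin d → ℝ), V q.1 q.2

/-- `inf_{(x,y) ∈ 𝕋^d × 𝒴^d} V (x,y)`. -/
def infV {d : ℕ} (V : (Fin d → ℝ) → (Fin d → ℝ) → ℝ) : ℝ :=
  ⨅ q : (Fin d → ℝ) × (Fin d → ℝ), V q.1 q.2

/-- `(w, m, H)` is a classical solution of the cell problem at `(x, Λ)`:
`|Λ+∇_y w|²/2 + V(x,y) = ln m + H`, `-div_y(m (Λ+∇_y w)) = 0` in `𝒴^d`, `∫_{𝒴^d} m = 1`. -/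
def CellSolAt {d : ℕ} (V : (Fin d → ℝ) → (Fin d → ℝ) → ℝ)
    (x Λ : Fin d → ℝ) (w m : (Fin d → ℝ) → ℝ) (H : ℝ) : Prop :=
  ContDiff ℝ 2 w ∧ ZPer w ∧ ContDiff ℝ 1 m ∧ ZPer m ∧ (∀ y, 0 < m y) ∧
  (∀ y, (∑ i, (Λ i + pder i w y) ^ 2) / 2 + V x y = Real.log (m y) + H) ∧
  (∀ y, (∑ i, pder i (fun z => m z * (Λ i + pder i w z)) y) = 0) ∧
  (∫ y in cube d, m y) = 1

/-- `α`-Hölder continuity. -/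
def HolderCont {d : ℕ} (α : ℝ) (f : (Fin d → ℝ) → ℝ) : Prop :=
  ∃ C : ℝ, ∀ x y, |f x - f y| ≤ C * dist x y ^ α

/-- Membership in `C^{2,α}`: twice continuously differentiable with `α`-Hölder
second partial derivatives. -/
def C2Holder {d : ℕ} (α : ℝ) (w : (Fin d → ℝ) → ℝ) : Prop :=
  ContDiff ℝ 2 w ∧ ∀ i j, HolderCont α fun y => pder i (fun z => pder j w z) y

/-- Membership in `C^{1,α}`: continuously differentiable with `α`-Hölder
first partial derivatives. -/
def C1Holder {d : ℕ} (α : ℝ) (m : (Fin d → ℝ) → ℝ) : Prop :=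
  ContDiff ℝ 1 m ∧ ∀ i, HolderCont α (pder i m)

variable {d : ℕ}

lemma zper_shift {f : (Fin d → ℝ) → ℝ} (hf : ZPer f) (k : Fin d → ℤ) :
    (fun y => f (y + fun i => (k i : ℝ))) = f := by
  funext y
  have := hf y k
  exact this

lemma zper_fderiv {f : (Fin d → ℝ) → ℝ} (hf : ZPer f) (hd : Differentiable ℝ f)
    (x : Fin d → ℝ) (k : Fin d → ℤ) :
    fderiv ℝ f (fun i => x i + (k i : ℝ)) = fderiv ℝ f x := by
  set c : Fin d → ℝ := fun i => (k i : ℝ) with hc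
  have hxc : (fun i => x i + (k i : ℝ)) = x + c := rfl
  rw [hxc]
  have h1 : HasFDerivAt f (fderiv ℝ f (x + c)) (x + c) := (hd (x + c)).hasFDerivAt
  have h2 : HasFDerivAt (fun y => y + c) (ContinuousLinearMap.id ℝ (Fin d → ℝ)) x :=
    (hasFDerivAt_id x).add_const c
  have h3 : HasFDerivAt (fun y => f (y + c)) (fderiv ℝ f (x + c)) x := by
    have := h1.comp x h2
    exact this
  rw [zper_shift hf k] at h3
  exact h3.fderiv.symm

lemma zper_pder {f : (Fin d → ℝ) → ℝ} (hf : ZPer f) (hd : Differentiable ℝ f) (i : Fin d) :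
    ZPer (pder i f) := by
  intro x k
  unfold pder
  rw [zper_fderiv hf hd x k]

lemma zper_eval {f : (Fin d → ℝ) → ℝ} (hf : ZPer f) (y : Fin d → ℝ) :
    f y = f (fun i => Int.fract (y i)) := by
  have := hf (fun i => Int.fract (y i)) (fun i => ⌊y i⌋)
  have h2 : (fun i => Int.fract (y i) + ((⌊y i⌋ : ℤ) : ℝ)) = y := by
    funext i; exact Int.fract_add_floor (y i)
  rw [h2] at this
  exact this

lemma fract_mem_cube (y : Fin d → ℝ) : (fun i => Int.fract (y i)) ∈ cube d := by
  intro i _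
  exact ⟨Int.fract_nonneg _, Int.fract_lt_one _⟩

lemma zper_zero_everywhere {f : (Fin d → ℝ) → ℝ} (hf : ZPer f)
    (h : ∀ y ∈ cube d, f y = 0) (y : Fin d → ℝ) : f y = 0 := by
  rw [zper_eval hf y]
  exact h _ (fract_mem_cube y)

lemma cube_subset_Icc : cube d ⊆ Set.Icc (0 : Fin d → ℝ) 1 := by
  rw [← Set.pi_univ_Icc]
  exact Set.pi_mono fun i _ => Set.Ico_subset_Icc_self

lemma measurableSet_cube : MeasurableSet (cube d) :=
  MeasurableSet.univ_pi fun _ => measurableSet_Ico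

lemma cube_ae_eq_Icc : cube d =ᶠ[ae volume] Set.Icc (0 : Fin d → ℝ) 1 := by
  have := MeasureTheory.Measure.univ_pi_Ico_ae_eq_Icc (μ := fun _ : Fin d => (volume : Measure ℝ))
    (f := fun _ => (0:ℝ)) (g := fun _ => (1:ℝ))
  rw [MeasureTheory.volume_pi]
  exact this

lemma contDiff_pder {n : ℕ} {w : (Fin d → ℝ) → ℝ} (hw : ContDiff ℝ (n+1) w) (i : Fin d) :
    ContDiff ℝ n (pder i w) := by
  have h1 : ContDiff ℝ n (fderiv ℝ w) := hw.fderiv_right (by norm_cast)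
  exact h1.clm_apply contDiff_const

lemma integral_div_zero (G : Fin d → (Fin d → ℝ) → ℝ)
    (hG : ∀ i, ContDiff ℝ 1 (G i)) (hper : ∀ i, ZPer (G i)) :
    ∫ y in cube d, ∑ i, pder i (G i) y = 0 := by
  cases d with
  | zero => simp
  | succ n =>
    have hle : (0 : Fin (n+1) → ℝ) ≤ 1 := fun i => zero_le_one
    have hcont : Continuous fun y => ∑ i, pder i (G i) y := by
      refine continuous_finset_sum _ fun i _ => ?_
      exact ((((hG i).fderiv_right (m := 0) (by norm_num)).clm_apply contDiff_const)).continuous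
    have key := MeasureTheory.integral_divergence_of_hasFDerivAt_off_countable'
      (0 : Fin (n+1) → ℝ) 1 hle G (fun i x => fderiv ℝ (G i) x) ∅ Set.countable_empty
      (fun i => (hG i).continuous.continuousOn)
      (fun x _ i => (((hG i).differentiable (by norm_num)) x).hasFDerivAt)
      (hcont.continuousOn.integrableOn_compact isCompact_Icc)
    have hfaces : ∀ i : Fin (n+1),
        ((∫ (x : Fin n → ℝ) in Set.Icc ((0 : Fin (n+1) → ℝ) ∘ i.succAbove) ((1 : Fin (n+1) → ℝ) ∘ i.succAbove),
            G i (i.insertNth ((1 : Fin (n+1) → ℝ) i) x)) -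
          ∫ (x : Fin n → ℝ) in Set.Icc ((0 : Fin (n+1) → ℝ) ∘ i.succAbove) ((1 : Fin (n+1) → ℝ) ∘ i.succAbove),
            G i (i.insertNth ((0 : Fin (n+1) → ℝ) i) x)) = 0 := by
      intro i
      have hpt : ∀ x : Fin n → ℝ,
          G i (i.insertNth ((1 : Fin (n+1) → ℝ) i) x) = G i (i.insertNth ((0 : Fin (n+1) → ℝ) i) x) := by
        intro x
        have hz := hper i (i.insertNth (0:ℝ) x : Fin (n+1) → ℝ) (Pi.single i 1)
        have harg : (fun j => (i.insertNth (0:ℝ) x : Fin (n+1) → ℝ) j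
              + (((Pi.single i (1:ℤ) : Fin (n+1) → ℤ) j : ℤ) : ℝ))
            = (i.insertNth (1:ℝ) x : Fin (n+1) → ℝ) := by
          funext j
          by_cases hji : j = i
          · subst hji; simp
          · obtain ⟨j', rfl⟩ := Fin.exists_succAbove_eq hji
            simp [Pi.single_apply, Fin.succAbove_ne, Fin.insertNth_apply_succAbove,
              (Fin.succAbove_ne i j'), (Fin.succAbove_ne i j').symm]
        rw [harg] at hz
        simpa using hz
      simp only [hpt, sub_self]
    rw [setIntegral_congr_set cube_ae_eq_Icc]
    rw [show (∫ y in Set.Icc (0:Fin (n+1) → ℝ) 1, ∑ i, pder i (G i) y)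
        = ∫ x in Set.Icc (0:Fin (n+1) → ℝ) 1, ∑ i, (fderiv ℝ (G i) x) (Pi.single i 1) from rfl]
    rw [key]
    exact Finset.sum_eq_zero fun i _ => hfaces i

lemma pder_mul {f g : (Fin d → ℝ) → ℝ} {y : Fin d → ℝ}
    (hf : DifferentiableAt ℝ f y) (hg : DifferentiableAt ℝ g y) (j : Fin d) :
    pder j (fun z => f z * g z) y = pder j f y * g y + f y * pder j g y := by
  unfold pder
  rw [fderiv_fun_mul hf hg]
  simp only [ContinuousLinearMap.add_apply, ContinuousLinearMap.coe_smul', Pi.smul_apply,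
    smul_eq_mul]
  ring

lemma ibp (φ : (Fin d → ℝ) → ℝ) (g : Fin d → (Fin d → ℝ) → ℝ)
    (hφ : ContDiff ℝ 1 φ) (hφp : ZPer φ)
    (hg : ∀ j, ContDiff ℝ 1 (g j)) (hgp : ∀ j, ZPer (g j))
    (hdiv : ∀ y, ∑ j, pder j (g j) y = 0) :
    ∫ y in cube d, ∑ j, pder j φ y * g j y = 0 := by
  have h0 := integral_div_zero (fun j => fun z => φ z * g j z)
    (fun j => hφ.mul (hg j))
    (fun j x k => by
      have h1 := hφp x k
      have h2 := hgp j x k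
      simp only [h1, h2])
  have heq : ∀ y ∈ cube d,
      (∑ j, pder j φ y * g j y) = ∑ j, pder j (fun z => φ z * g j z) y := by
    intro y _
    have hterm : ∀ j : Fin d, pder j (fun z => φ z * g j z) y
        = pder j φ y * g j y + φ y * pder j (g j) y :=
      fun j => pder_mul (hφ.differentiable (by norm_num) y) ((hg j).differentiable (by norm_num) y) j
    rw [Finset.sum_congr rfl fun j _ => hterm j, Finset.sum_add_distrib,
      ← Finset.mul_sum, hdiv y, mul_zero, add_zero]
  rw [setIntegral_congr_fun measurableSet_cube heq]
  exact h0

lemma cube_ball_pos {y : Fin d → ℝ} (hy : y ∈ cube d) {r : ℝ} (hr : 0 < r) :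
    0 < volume (cube d ∩ Metric.ball y r) := by
  have hsub : (Set.univ.pi fun i => Set.Ico (y i) (min 1 (y i + r)))
      ⊆ cube d ∩ Metric.ball y r := by
    intro z hz
    constructor
    · intro i _
      have hzi := hz i (Set.mem_univ i)
      have hyi := hy i (Set.mem_univ i)
      exact ⟨le_trans hyi.1 hzi.1, lt_of_lt_of_le hzi.2 (min_le_left _ _)⟩
    · rw [Metric.mem_ball, dist_pi_lt_iff hr]
      intro i
      have hzi := hz i (Set.mem_univ i)
      have h2 : z i < y i + r := lt_of_lt_of_le hzi.2 (min_le_right _ _)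
      rw [Real.dist_eq, abs_lt]
      constructor <;> [linarith [hzi.1]; linarith]
  refine lt_of_lt_of_le ?_ (measure_mono hsub)
  rw [volume_pi_pi]
  refine CanonicallyOrderedAdd.prod_pos.mpr fun i _ => ?_
  rw [Real.volume_Ico]
  apply ENNReal.ofReal_pos.mpr
  have hyi := hy i (Set.mem_univ i)
  have : y i < min 1 (y i + r) := lt_min hyi.2 (by linarith)
  linarith

lemma eq_zero_on_cube {f : (Fin d → ℝ) → ℝ} (hc : Continuous f) (hnn : ∀ y, 0 ≤ f y)
    (hint : (∫ y in cube d, f y) = 0) : ∀ y ∈ cube d, f y = 0 := by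
  intro y hy
  by_contra hne
  have hpos : 0 < f y := lt_of_le_of_ne (hnn y) (Ne.symm hne)
  obtain ⟨r, hr, hball⟩ : ∃ r > 0, Metric.ball y r ⊆ {z | f y / 2 < f z} := by
    have hmem : {z | f y / 2 < f z} ∈ nhds y :=
      (isOpen_Ioi.preimage hc).mem_nhds (by simp only [Set.mem_preimage, Set.mem_Ioi]; linarith)
    exact Metric.mem_nhds_iff.mp hmem
  set s := cube d ∩ Metric.ball y r with hs
  have hmeas : MeasurableSet s := measurableSet_cube.inter Metric.isOpen_ball.measurableSet
  have hfin : volume s ≠ ⊤ :=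
    ne_of_lt (lt_of_le_of_lt (measure_mono (Set.inter_subset_left.trans cube_subset_Icc))
      isCompact_Icc.measure_lt_top)
  have hint_f : IntegrableOn f (cube d) :=
    (hc.continuousOn.integrableOn_compact isCompact_Icc).mono_set cube_subset_Icc
  have h1 : f y / 2 * (volume s).toReal ≤ ∫ z in s, f z :=
    setIntegral_ge_of_const_le_real hmeas hfin (fun z hz => (hball hz.2).le)
      (hint_f.mono_set Set.inter_subset_left)
  have h2 : (∫ z in s, f z) ≤ ∫ z in cube d, f z :=
    setIntegral_mono_set hint_f (Filter.Eventually.of_forall hnn)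
      (HasSubset.Subset.eventuallyLE Set.inter_subset_left)
  have hvol : 0 < (volume s).toReal :=
    ENNReal.toReal_pos (ne_of_gt (cube_ball_pos hy hr)) hfin
  have : 0 < f y / 2 * (volume s).toReal := by positivity
  linarith [hint ▸ h2]

lemma pder_sub {f g : (Fin d → ℝ) → ℝ} {y : Fin d → ℝ}
    (hf : DifferentiableAt ℝ f y) (hg : DifferentiableAt ℝ g y) (j : Fin d) :
    pder j (fun z => f z - g z) y = pder j f y - pder j g y := by
  unfold pder
  rw [fderiv_fun_sub hf hg]
  simp

lemma term1_nonneg {a b : ℝ} (ha : 0 < a) (hb : 0 < b) :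
    0 ≤ (a - b) * (Real.log a - Real.log b) := by
  rcases le_total a b with h | h
  · have h2 := Real.log_le_log ha h
    nlinarith
  · apply mul_nonneg
    · linarith
    · have := Real.log_le_log hb h
      linarith

lemma term1_eq_zero {a b : ℝ} (ha : 0 < a) (hb : 0 < b)
    (h : (a - b) * (Real.log a - Real.log b) = 0) : a = b := by
  rcases lt_trichotomy a b with hlt | heq | hgt
  · exfalso
    have hl := Real.log_lt_log ha hlt
    nlinarith
  · exact heq
  · exfalso
    have hl := Real.log_lt_log hb hgt
    nlinarith


/-- uniqueness for the cell problem: two solutions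
`(w̃_i, m̃_i, H̃_i)` with `w̃_i ∈ C^{2,α}_#(𝒴^d)/ℝ` and `m̃_i ∈ C^{1,α}_#(𝒴^d)` positive
coincide (`w̃` up to an additive constant). -/
theorem stmt10 {d : ℕ} (V : (Fin d → ℝ) → (Fin d → ℝ) → ℝ) (hV : SmoothV V)
    (α : ℝ) (hα : α ∈ Set.Ioo (0 : ℝ) 1) (x Λ : Fin d → ℝ)
    (w₁ w₂ m₁ m₂ : (Fin d → ℝ) → ℝ) (H₁ H₂ : ℝ)
    (hsol₁ : CellSolAt V x Λ w₁ m₁ H₁) (hreg₁ : C2Holder α w₁ ∧ C1Holder α m₁)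
    (hsol₂ : CellSolAt V x Λ w₂ m₂ H₂) (hreg₂ : C2Holder α w₂ ∧ C1Holder α m₂) :
    (∃ c : ℝ, ∀ y, w₁ y = w₂ y + c) ∧ m₁ = m₂ ∧ H₁ = H₂ := by
  obtain ⟨hw₁, hwp₁, hm₁, hmp₁, hmpos₁, hHJB₁, hK₁, hint₁⟩ := hsol₁
  obtain ⟨hw₂, hwp₂, hm₂, hmp₂, hmpos₂, hHJB₂, hK₂, hint₂⟩ := hsol₂
  -- basic regularity facts
  have hw₁' : ContDiff ℝ ((1:ℕ)+1) w₁ := by exact_mod_cast hw₁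
  have hw₂' : ContDiff ℝ ((1:ℕ)+1) w₂ := by exact_mod_cast hw₂
  have hdw₁ : ∀ j, ContDiff ℝ 1 (pder j w₁) := fun j => by exact_mod_cast contDiff_pder hw₁' j
  have hdw₂ : ∀ j, ContDiff ℝ 1 (pder j w₂) := fun j => by exact_mod_cast contDiff_pder hw₂' j
  have hwd₁ : Differentiable ℝ w₁ := hw₁.differentiable (by norm_num)
  have hwd₂ : Differentiable ℝ w₂ := hw₂.differentiable (by norm_num)
  have hpper₁ : ∀ j, ZPer (pder j w₁) := fun j => zper_pder hwp₁ hwd₁ j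
  have hpper₂ : ∀ j, ZPer (pder j w₂) := fun j => zper_pder hwp₂ hwd₂ j
  have hφ : ContDiff ℝ 1 fun z => w₁ z - w₂ z := (hw₁.sub hw₂).of_le (by norm_num)
  have hφp : ZPer fun z => w₁ z - w₂ z := by
    intro y k; simp only [hwp₁ y k, hwp₂ y k]
  have hpsub : ∀ (j) (y : Fin d → ℝ),
      pder j (fun z => w₁ z - w₂ z) y = pder j w₁ y - pder j w₂ y :=
    fun j y => pder_sub (hwd₁ y) (hwd₂ y) j
  -- the two integration-by-parts identities
  have E₁ : (∫ y in cube d,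
      ∑ j, (pder j w₁ y - pder j w₂ y) * (m₁ y * (Λ j + pder j w₁ y))) = 0 := by
    have h := ibp (fun z => w₁ z - w₂ z) (fun j z => m₁ z * (Λ j + pder j w₁ z)) hφ hφp
      (fun j => hm₁.mul (contDiff_const.add (hdw₁ j)))
      (fun j y k => by simp only [hmp₁ y k, hpper₁ j y k]) hK₁
    rw [← h]
    refine setIntegral_congr_fun measurableSet_cube fun y _ => ?_
    exact Finset.sum_congr rfl fun j _ => by rw [hpsub j y]
  have E₂ : (∫ y in cube d,
      ∑ j, (pder j w₁ y - pder j w₂ y) * (m₂ y * (Λ j + pder j w₂ y))) = 0 := by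
    have h := ibp (fun z => w₁ z - w₂ z) (fun j z => m₂ z * (Λ j + pder j w₂ z)) hφ hφp
      (fun j => hm₂.mul (contDiff_const.add (hdw₂ j)))
      (fun j y k => by simp only [hmp₂ y k, hpper₂ j y k]) hK₂
    rw [← h]
    refine setIntegral_congr_fun measurableSet_cube fun y _ => ?_
    exact Finset.sum_congr rfl fun j _ => by rw [hpsub j y]
  -- integrability
  have hi₁ : IntegrableOn m₁ (cube d) :=
    (hm₁.continuous.continuousOn.integrableOn_compact isCompact_Icc).mono_set cube_subset_Icc
  have hi₂ : IntegrableOn m₂ (cube d) :=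
    (hm₂.continuous.continuousOn.integrableOn_compact isCompact_Icc).mono_set cube_subset_Icc
  have hm_int : (∫ y in cube d, (m₁ y - m₂ y)) = 0 := by
    rw [integral_sub hi₁ hi₂, hint₁, hint₂]; ring
  -- the key nonnegative quantity
  set F : (Fin d → ℝ) → ℝ := fun y =>
    (m₁ y - m₂ y) * (Real.log (m₁ y) - Real.log (m₂ y))
      + ∑ j, (m₁ y + m₂ y) * (pder j w₁ y - pder j w₂ y) ^ 2 / 2 with hF
  have hFnn : ∀ y, 0 ≤ F y := by
    intro y
    have h1 := term1_nonneg (hmpos₁ y) (hmpos₂ y)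
    have h2 : 0 ≤ ∑ j, (m₁ y + m₂ y) * (pder j w₁ y - pder j w₂ y) ^ 2 / 2 := by
      refine Finset.sum_nonneg fun j _ => ?_
      have := hmpos₁ y; have := hmpos₂ y
      positivity
    simp only [hF]; linarith
  have hlogc₁ : Continuous fun y => Real.log (m₁ y) :=
    continuous_iff_continuousAt.mpr fun y =>
      (Real.continuousAt_log (ne_of_gt (hmpos₁ y))).comp hm₁.continuous.continuousAt
  have hlogc₂ : Continuous fun y => Real.log (m₂ y) :=
    continuous_iff_continuousAt.mpr fun y =>
      (Real.continuousAt_log (ne_of_gt (hmpos₂ y))).comp hm₂.continuous.continuousAt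
  have hFcont : Continuous F := by
    apply Continuous.add
    · exact (hm₁.continuous.sub hm₂.continuous).mul (hlogc₁.sub hlogc₂)
    · refine continuous_finset_sum _ fun j _ => ?_
      exact (((hm₁.continuous.add hm₂.continuous).mul
        (((hdw₁ j).continuous.sub (hdw₂ j).continuous).pow 2))).div_const 2
  have hFper : ZPer F := by
    intro y k
    simp only [hF, hmp₁ y k, hmp₂ y k, hpper₁ _ y k, hpper₂ _ y k]
  -- pointwise identity
  have hFeq : ∀ y, F y =
      (∑ j, (pder j w₁ y - pder j w₂ y) * (m₁ y * (Λ j + pder j w₁ y)))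
        - (∑ j, (pder j w₁ y - pder j w₂ y) * (m₂ y * (Λ j + pder j w₂ y)))
        - (H₁ - H₂) * (m₁ y - m₂ y) := by
    intro y
    have h1 := hHJB₁ y
    have h2 := hHJB₂ y
    have hlog : Real.log (m₁ y) - Real.log (m₂ y)
        = (∑ j, (Λ j + pder j w₁ y) ^ 2) / 2 - (∑ j, (Λ j + pder j w₂ y) ^ 2) / 2
          - (H₁ - H₂) := by linarith
    have hsum2 : (m₁ y - m₂ y) * ((∑ j, (Λ j + pder j w₁ y) ^ 2) / 2)
        - (m₁ y - m₂ y) * ((∑ j, (Λ j + pder j w₂ y) ^ 2) / 2)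
        + (∑ j, (m₁ y + m₂ y) * (pder j w₁ y - pder j w₂ y) ^ 2 / 2)
        = (∑ j, (pder j w₁ y - pder j w₂ y) * (m₁ y * (Λ j + pder j w₁ y)))
          - (∑ j, (pder j w₁ y - pder j w₂ y) * (m₂ y * (Λ j + pder j w₂ y))) := by
      simp only [div_eq_mul_inv, Finset.sum_mul, Finset.mul_sum, ← Finset.sum_sub_distrib,
        ← Finset.sum_add_distrib]
      exact Finset.sum_congr rfl fun j _ => by ring
    simp only [hF]
    rw [hlog]
    linear_combination hsum2
  -- the integral of F vanishes
  have hFint : (∫ y in cube d, F y) = 0 := by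
    have hSa : IntegrableOn (fun y =>
        ∑ j, (pder j w₁ y - pder j w₂ y) * (m₁ y * (Λ j + pder j w₁ y))) (cube d) := by
      refine ((Continuous.continuousOn ?_).integrableOn_compact isCompact_Icc).mono_set
        cube_subset_Icc
      exact continuous_finset_sum _ fun j _ =>
        ((hdw₁ j).continuous.sub (hdw₂ j).continuous).mul
          (hm₁.continuous.mul (continuous_const.add (hdw₁ j).continuous))
    have hSb : IntegrableOn (fun y =>
        ∑ j, (pder j w₁ y - pder j w₂ y) * (m₂ y * (Λ j + pder j w₂ y))) (cube d) := by
      refine ((Continuous.continuousOn ?_).integrableOn_compact isCompact_Icc).mono_set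
        cube_subset_Icc
      exact continuous_finset_sum _ fun j _ =>
        ((hdw₁ j).continuous.sub (hdw₂ j).continuous).mul
          (hm₂.continuous.mul (continuous_const.add (hdw₂ j).continuous))
    have step1 : (∫ y in cube d,
        ((∑ j, (pder j w₁ y - pder j w₂ y) * (m₁ y * (Λ j + pder j w₁ y)))
          - (∑ j, (pder j w₁ y - pder j w₂ y) * (m₂ y * (Λ j + pder j w₂ y)))
          - (H₁ - H₂) * (m₁ y - m₂ y)))
        = (∫ y in cube d,
            ((∑ j, (pder j w₁ y - pder j w₂ y) * (m₁ y * (Λ j + pder j w₁ y)))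
              - (∑ j, (pder j w₁ y - pder j w₂ y) * (m₂ y * (Λ j + pder j w₂ y)))))
          - ∫ y in cube d, (H₁ - H₂) * (m₁ y - m₂ y) :=
      integral_sub (hSa.sub hSb) ((hi₁.sub hi₂).const_mul (H₁ - H₂))
    have step2 : (∫ y in cube d,
        ((∑ j, (pder j w₁ y - pder j w₂ y) * (m₁ y * (Λ j + pder j w₁ y)))
          - (∑ j, (pder j w₁ y - pder j w₂ y) * (m₂ y * (Λ j + pder j w₂ y)))))
        = (∫ y in cube d, ∑ j, (pder j w₁ y - pder j w₂ y) * (m₁ y * (Λ j + pder j w₁ y)))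
          - ∫ y in cube d, ∑ j, (pder j w₁ y - pder j w₂ y) * (m₂ y * (Λ j + pder j w₂ y)) :=
      integral_sub hSa hSb
    have step3 : (∫ y in cube d, (H₁ - H₂) * (m₁ y - m₂ y))
        = (H₁ - H₂) * ∫ y in cube d, (m₁ y - m₂ y) := integral_const_mul _ _
    rw [setIntegral_congr_fun measurableSet_cube fun y _ => hFeq y, step1, step2, step3,
      hm_int, E₁, E₂]
    ring
  -- F vanishes identically
  have hF0 : ∀ y, F y = 0 :=
    zper_zero_everywhere hFper (eq_zero_on_cube hFcont hFnn hFint)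
  -- pointwise conclusions
  have hmeq : ∀ y, m₁ y = m₂ y := by
    intro y
    have h0 := hF0 y
    have h1 := term1_nonneg (hmpos₁ y) (hmpos₂ y)
    have h2 : 0 ≤ ∑ j, (m₁ y + m₂ y) * (pder j w₁ y - pder j w₂ y) ^ 2 / 2 := by
      refine Finset.sum_nonneg fun j _ => ?_
      have := hmpos₁ y; have := hmpos₂ y
      positivity
    simp only [hF] at h0
    exact term1_eq_zero (hmpos₁ y) (hmpos₂ y) (by linarith)
  have hqeq : ∀ (y : Fin d → ℝ) (j : Fin d), pder j w₁ y = pder j w₂ y := by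
    intro y j
    have h0 := hF0 y
    have h1 := term1_nonneg (hmpos₁ y) (hmpos₂ y)
    have hnn : ∀ i ∈ Finset.univ, (0:ℝ) ≤ (m₁ y + m₂ y) * (pder i w₁ y - pder i w₂ y) ^ 2 / 2 := by
      intro i _
      have := hmpos₁ y; have := hmpos₂ y
      positivity
    have h2 : (∑ j, (m₁ y + m₂ y) * (pder j w₁ y - pder j w₂ y) ^ 2 / 2) = 0 := by
      have hge := Finset.sum_nonneg hnn
      simp only [hF] at h0
      linarith
    have h3 := (Finset.sum_eq_zero_iff_of_nonneg hnn).mp h2 j (Finset.mem_univ j)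
    have hm12 : 0 < m₁ y + m₂ y := by have := hmpos₁ y; have := hmpos₂ y; linarith
    have h4 : (pder j w₁ y - pder j w₂ y) ^ 2 = 0 := by
      rcases eq_or_lt_of_le (sq_nonneg (pder j w₁ y - pder j w₂ y)) with h | h
      · exact h.symm
      · exfalso; nlinarith [h3, hm12, h]
    have h5 := pow_eq_zero_iff (n := 2) (by norm_num) |>.mp h4
    linarith [h5]
  -- conclude for w
  have hΦdiff : Differentiable ℝ fun z => w₁ z - w₂ z := hwd₁.sub hwd₂
  have hsingle : ∀ i : Fin d, (Pi.single i (1:ℝ) : Fin d → ℝ)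
      = fun j => if i = j then (1:ℝ) else 0 := by
    intro i; funext j; rw [Pi.single_apply]; simp [eq_comm]
  have hfd : ∀ y, fderiv ℝ (fun z => w₁ z - w₂ z) y = 0 := by
    intro y
    apply ContinuousLinearMap.ext
    intro v
    have hv : v = ∑ i, v i • (Pi.single i (1:ℝ) : Fin d → ℝ) := by
      conv_lhs => rw [pi_eq_sum_univ v]
      exact Finset.sum_congr rfl fun i _ => by rw [hsingle i]
    rw [hv, map_sum]
    simp only [ContinuousLinearMap.map_smul]
    have hterm : ∀ i : Fin d,
        fderiv ℝ (fun z => w₁ z - w₂ z) y (Pi.single i (1:ℝ)) = 0 := by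
      intro i
      have h6 := hpsub i y
      unfold pder at h6
      have hq := hqeq y i
      unfold pder at hq
      rw [h6, hq]; ring
    simp only [hterm, smul_zero, Finset.sum_const_zero, ContinuousLinearMap.zero_apply]
  have hconst := is_const_of_fderiv_eq_zero hΦdiff hfd
  refine ⟨⟨w₁ 0 - w₂ 0, fun y => ?_⟩, funext hmeq, ?_⟩
  · have := hconst y 0
    linarith
  · have h1 := hHJB₁ 0
    have h2 := hHJB₂ 0
    have hs : (∑ i, (Λ i + pder i w₁ 0) ^ 2) = ∑ i, (Λ i + pder i w₂ 0) ^ 2 :=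
      Finset.sum_congr rfl fun i _ => by rw [hqeq 0 i]
    have hm0 := hmeq 0
    rw [hs, hm0] at h1
    linarith
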